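/- arXiv:1406.5414 — 2 statements merged into one kernel-verified Lean document; each statement's English description precedes it below -/
import Mathlib

section
/- Let $X$ be a bounded (by $2\varepsilon$) martingale with $E[X] = 0$ and $E[|X|] \ge 6\alpha\varepsilon$ for some $\alpha \in (0,1)$ and $\varepsilon > 0$. Then $P[X < -\alpha\varepsilon] \ge \alpha$. -/
open MeasureTheory Filter Set
open scoped ENNReal Topology

noncomputable section
open Classical

variable {Ω : Type*}

/-- A simple predictable strategy `H = ∑_{i=0}^n K_i 1_{(τ_i, τ_{i+1}]}` with stopping times
`0 = τ_0 ≤ … ≤ τ_{n+1} = 1` and `K_i` being `𝓕_{τ_i}`-measurable. -/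
structure SimpleStrategy {m : MeasurableSpace Ω} (𝓕 : Filtration ℝ m) where
  n : ℕ
  τ : ℕ → Ω → ℝ
  K : ℕ → Ω → ℝ
  isStopping : ∀ i, IsStoppingTime 𝓕 (fun ω => ((τ i ω : ℝ) : WithTop ℝ))
  mono : ∀ ω, Monotone fun i => τ i ω
  zero : ∀ ω, τ 0 ω = 0
  last : ∀ ω, τ (n + 1) ω = 1
  meas : ∀ i, Measurable[(isStopping i).measurableSpace] (K i)

namespace SimpleStrategy

variable {m : MeasurableSpace Ω} {𝓕 : Filtration ℝ m}

/-- The strategy is bounded by `1`. -/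
def Bounded1 (H : SimpleStrategy 𝓕) : Prop := ∀ i ω, |H.K i ω| ≤ 1

/-- The (elementary) stochastic integral `(H ∙ X)_t`. -/
def integral (H : SimpleStrategy 𝓕) (X : ℝ → Ω → ℝ) (t : ℝ) (ω : Ω) : ℝ :=
  ∑ i ∈ Finset.range (H.n + 1),
    H.K i ω * (X (min (H.τ (i + 1) ω) t) ω - X (min (H.τ i ω) t) ω)

end SimpleStrategy

/-- Running supremum of `|X|` over the time interval `[0,1]`. -/
def runSup (X : ℝ → Ω → ℝ) (ω : Ω) : ℝ :=
  sSup ((fun t => |X t ω|) '' Icc (0 : ℝ) 1)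

/-- A sequence of random variables is bounded in `L⁰` (bounded in probability). -/
def L0BoundedSeq {m : MeasurableSpace Ω} (μ : Measure Ω) (ξ : ℕ → Ω → ℝ) : Prop :=
  Tendsto (fun a : ℝ => ⨆ n, μ {ω | a ≤ |ξ n ω|}) atTop (𝓝 (0 : ℝ≥0∞))

/-- Predictable uniform tightness (P-UT) of a sequence of processes on `[0,1]`. -/
def PUT {m : MeasurableSpace Ω} (𝓕 : Filtration ℝ m) (μ : Measure Ω)
    (X : ℕ → ℝ → Ω → ℝ) : Prop :=
  ∀ t ∈ Icc (0 : ℝ) 1,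
    Tendsto (fun a : ℝ =>
        ⨆ (n : ℕ) (H : SimpleStrategy 𝓕) (_ : H.Bounded1),
          μ {ω | a ≤ |H.integral (X n) t ω|}) atTop (𝓝 (0 : ℝ≥0∞))

/-- A process is càdlàg (right-continuous with left limits) in time, for every `ω`. -/
def IsCadlag (X : ℝ → Ω → ℝ) : Prop :=
  ∀ ω, (∀ t, ContinuousWithinAt (fun s => X s ω) (Ici t) t) ∧
    ∀ t, ∃ l, Tendsto (fun s => X s ω) (𝓝[<] t) (𝓝 l)

/-- The jump `ΔX_t = X_t - X_{t-}` of a process. -/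
def jump (X : ℝ → Ω → ℝ) (t : ℝ) (ω : Ω) : ℝ :=
  X t ω - Function.leftLim (fun s => X s ω) t

/-- Uniform convergence in probability on `[0,1]` (ucp). -/
def TendstoUCP {m : MeasurableSpace Ω} (μ : Measure Ω) (X : ℕ → ℝ → Ω → ℝ)
    (Y : ℝ → Ω → ℝ) : Prop :=
  ∀ ε : ℝ, 0 < ε →
    Tendsto (fun n => μ {ω | ε ≤ runSup (fun t ω' => X n t ω' - Y t ω') ω}) atTop
      (𝓝 (0 : ℝ≥0∞))

/-- A finite partition `0 = t_0 < t_1 < … < t_r = 1` of `[0,1]`. -/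
structure Partition01 where
  r : ℕ
  t : ℕ → ℝ
  pos : 0 < r
  zero : t 0 = 0
  last : t r = 1
  mono : ∀ i < r, t i < t (i + 1)

/-- The mesh of a partition. -/
def Partition01.mesh (P : Partition01) : ℝ :=
  ⨆ i : Fin P.r, (P.t (i.1 + 1) - P.t i.1)

/-- Riemann-type sum for the quadratic covariation along a partition, up to time `t`. -/
def qcovSum (P : Partition01) (X Y : ℝ → Ω → ℝ) (t : ℝ) (ω : Ω) : ℝ :=
  ∑ i ∈ Finset.range P.r,
    (X (min (P.t (i + 1)) t) ω - X (min (P.t i) t) ω) *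
      (Y (min (P.t (i + 1)) t) ω - Y (min (P.t i) t) ω)

/-- `Q` is the quadratic covariation process `[X,Y]` : along every sequence of partitions with
vanishing mesh the Riemann sums converge in probability. -/
def IsQCovProcess {m : MeasurableSpace Ω} (μ : Measure Ω) (X Y Q : ℝ → Ω → ℝ) : Prop :=
  ∀ P : ℕ → Partition01, Tendsto (fun k => (P k).mesh) atTop (𝓝 (0 : ℝ)) →
    ∀ t ∈ Icc (0 : ℝ) 1,
      TendstoInMeasure μ (fun k ω => qcovSum (P k) X Y t ω) atTop (Q t)

/-- Riemann-type sum with left endpoints for the stochastic integral `H_- ∙ X`. -/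
def leftRiemannSum (P : Partition01) (H X : ℝ → Ω → ℝ) (t : ℝ) (ω : Ω) : ℝ :=
  ∑ i ∈ Finset.range P.r,
    H (P.t i) ω * (X (min (P.t (i + 1)) t) ω - X (min (P.t i) t) ω)

/-- `I` is the stochastic integral process `H_- ∙ X`, characterized as the limit in
probability of left-endpoint Riemann sums along partitions with vanishing mesh. -/
def IsLeftIntegral {m : MeasurableSpace Ω} (μ : Measure Ω) (H X I : ℝ → Ω → ℝ) : Prop :=
  ∀ P : ℕ → Partition01, Tendsto (fun k => (P k).mesh) atTop (𝓝 (0 : ℝ)) →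
    ∀ t ∈ Icc (0 : ℝ) 1,
      TendstoInMeasure μ (fun k ω => leftRiemannSum (P k) H X t ω) atTop (I t)

/-- The process `X` stopped at the random time `τ`. -/
def stoppedAt (X : ℝ → Ω → ℝ) (τ : Ω → ℝ) : ℝ → Ω → ℝ := fun t ω => X (min t (τ ω)) ω

/-- A local martingale on `[0,1]`. -/
def IsLocalMartingale {m : MeasurableSpace Ω} (𝓕 : Filtration ℝ m) (μ : Measure Ω)
    (N : ℝ → Ω → ℝ) : Prop :=
  ∃ τ : ℕ → Ω → ℝ, (∀ k, IsStoppingTime 𝓕 (fun ω => ((τ k ω : ℝ) : WithTop ℝ))) ∧ (∀ ω, Monotone fun k => τ k ω) ∧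
    (∀ ω, ∃ k, 1 ≤ τ k ω) ∧ ∀ k, Martingale (stoppedAt N (τ k)) 𝓕 μ

/-- The predictable σ-algebra on `ℝ × Ω`, generated by the stochastic intervals
`(a,b] × A`, `A ∈ 𝓕_a`, and `{0} × A`, `A ∈ 𝓕_0`. -/
def predictableSigma {m : MeasurableSpace Ω} (𝓕 : Filtration ℝ m) :
    MeasurableSpace (ℝ × Ω) :=
  MeasurableSpace.generateFrom
    ({s | ∃ (a b : ℝ) (A : Set Ω), MeasurableSet[𝓕 a] A ∧ s = Ioc a b ×ˢ A} ∪
      {s | ∃ A : Set Ω, MeasurableSet[𝓕 0] A ∧ s = ({0} : Set ℝ) ×ˢ A})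

/-- A predictable process. -/
def Predictable {m : MeasurableSpace Ω} (𝓕 : Filtration ℝ m) (H : ℝ → Ω → ℝ) : Prop :=
  @Measurable _ _ (predictableSigma 𝓕) _ fun p : ℝ × Ω => H p.1 p.2

/-- The Emery (semimartingale) distance on processes on `[0,1]`. -/
def emeryDist {m : MeasurableSpace Ω} (𝓕 : Filtration ℝ m) (μ : Measure Ω)
    (X Y : ℝ → Ω → ℝ) : ℝ :=
  ⨆ H : {H : SimpleStrategy 𝓕 // H.Bounded1},
    ∫ ω, min (runSup (fun t ω' =>
      H.1.integral (fun s ω'' => X s ω'' - Y s ω'') t ω') ω) 1 ∂μ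

/-- A set of processes is (sequentially) closed in the Emery topology. -/
def EmeryClosed {m : MeasurableSpace Ω} (𝓕 : Filtration ℝ m) (μ : Measure Ω)
    (𝒳 : Set (ℝ → Ω → ℝ)) : Prop :=
  ∀ (X : ℕ → ℝ → Ω → ℝ) (Y : ℝ → Ω → ℝ), (∀ n, X n ∈ 𝒳) →
    Tendsto (fun n => emeryDist 𝓕 μ (X n) Y) atTop (𝓝 (0 : ℝ)) → Y ∈ 𝒳

/-- An abstract stochastic integral operator `(H, X) ↦ H ∙ X`, assumed to be additive,
to agree with the elementary integral on elementary predictable strategies, to be monotone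
against integrators of monotone paths (Stieltjes case) and to satisfy associativity. -/
structure StochInt {m : MeasurableSpace Ω} (𝓕 : Filtration ℝ m) where
  int : (ℝ → Ω → ℝ) → (ℝ → Ω → ℝ) → ℝ → Ω → ℝ
  add_strat : ∀ H G X t ω,
    int (fun s ω' => H s ω' + G s ω') X t ω = int H X t ω + int G X t ω
  add_integrator : ∀ H X Y t ω,
    int H (fun s ω' => X s ω' + Y s ω') t ω = int H X t ω + int H Y t ω
  elem : ∀ (u v : ℝ) (K : Ω → ℝ), Measurable[𝓕 u] K → ∀ X t ω,
    int (fun s ω' => K ω' * (Ioc u v).indicator (fun _ => (1 : ℝ)) s) X t ω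
      = K ω * (X (min v t) ω - X (min u t) ω)
  mono_fv : ∀ H G X, (∀ s ω, H s ω ≤ G s ω) → (∀ ω, Monotone fun s => X s ω) →
    ∀ t ω, int H X t ω ≤ int G X t ω
  assoc : ∀ H G X t ω, int H (int G X) t ω = int (fun s ω' => H s ω' * G s ω') X t ω

/-- Kabanov's concatenation property of a set of (1-admissible) wealth processes. -/
def ConcatProperty {m : MeasurableSpace Ω} (𝓕 : Filtration ℝ m) (I : StochInt 𝓕)
    (𝒳 : Set (ℝ → Ω → ℝ)) : Prop :=
  ∀ H G : ℝ → Ω → ℝ, Predictable 𝓕 H → Predictable 𝓕 G →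
    (∃ c, ∀ s ω, |H s ω| ≤ c) → (∃ c, ∀ s ω, |G s ω| ≤ c) →
    (∀ s ω, 0 ≤ H s ω) → (∀ s ω, 0 ≤ G s ω) → (∀ s ω, H s ω * G s ω = 0) →
    ∀ X ∈ 𝒳, ∀ Y ∈ 𝒳,
      (∀ t ∈ Icc (0 : ℝ) 1, ∀ ω, -1 ≤ I.int H X t ω + I.int G Y t ω) →
      (fun t ω => I.int H X t ω + I.int G Y t ω) ∈ 𝒳

/-- The abstract setting of Kabanov: `𝒳₁` is a convex set of semimartingales starting at `0`,
bounded from below by `-1`, closed in the Emery topology, with the concatenation property. -/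
def KabanovSetting {m : MeasurableSpace Ω} (𝓕 : Filtration ℝ m) (μ : Measure Ω)
    (I : StochInt 𝓕) (𝒳 : Set (ℝ → Ω → ℝ)) : Prop :=
  Convex ℝ 𝒳 ∧ (∀ X ∈ 𝒳, ∀ ω, X 0 ω = 0) ∧
    (∀ X ∈ 𝒳, ∀ t ∈ Icc (0 : ℝ) 1, ∀ ω, -1 ≤ X t ω) ∧
    EmeryClosed 𝓕 μ 𝒳 ∧ ConcatProperty 𝓕 I 𝒳

/-! Since `E[X] = 0`, `E[X⁻] = E[|X|] / 2 ≥ 3αε`. Splitting `E[X⁻]` at the level `αε` bounds it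
by `2ε · P[X < -αε] + αε`, which forces `P[X < -αε] ≥ α`. -/

theorem integral_le_mul_measureReal_add_mul {m : MeasurableSpace Ω} {μ : Measure Ω}
    [IsFiniteMeasure μ] {f : Ω → ℝ} {M : ℝ} (hf : Integrable f μ)
    (hM : ∀ᵐ ω ∂μ, f ω ≤ M) (c : ℝ) :
    ∫ ω, f ω ∂μ ≤ M * μ.real {ω | c < f ω} + c * μ.real {ω | f ω ≤ c} := by
  set s := {ω | c < f ω}
  have hs : NullMeasurableSet s μ := nullMeasurableSet_lt aemeasurable_const hf.aemeasurable
  have hsc : sᶜ = {ω | f ω ≤ c} := by ext; simp [s]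
  have h_on_s : ∫ ω in s, f ω ∂μ ≤ M * μ.real s := by
    calc ∫ ω in s, f ω ∂μ ≤ ∫ _ in s, M ∂μ :=
          setIntegral_mono_ae_restrict hf.integrableOn (integrableOn_const (measure_ne_top _ _))
            (ae_restrict_of_ae hM)
      _ = M * μ.real s := by rw [setIntegral_const, smul_eq_mul, mul_comm]
  have h_on_sc : ∫ ω in sᶜ, f ω ∂μ ≤ c * μ.real sᶜ := by
    calc ∫ ω in sᶜ, f ω ∂μ ≤ ∫ _ in sᶜ, c ∂μ := by
          refine setIntegral_mono_ae_restrict hf.integrableOn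
            (integrableOn_const (measure_ne_top _ _)) ?_
          filter_upwards [ae_restrict_mem₀ hs.compl] with ω hω
          simpa [s] using hω
      _ = c * μ.real sᶜ := by rw [setIntegral_const, smul_eq_mul, mul_comm]
  rw [← integral_add_compl₀ hs hf, ← hsc]
  exact add_le_add h_on_s h_on_sc

theorem lt_negPart_iff_lt_neg {G : Type*} [AddCommGroup G] [LinearOrder G]
    [IsOrderedAddMonoid G] {a c : G} (hc : 0 ≤ c) : c < a⁻ ↔ a < -c := by
  rw [negPart_def, lt_max_iff, or_iff_left hc.not_gt, lt_neg]

theorem neg_part_bound_general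
    {m : MeasurableSpace Ω} (μ : Measure Ω) [IsProbabilityMeasure μ]
    (ε α : ℝ) (hε : 0 < ε) (hα : 0 < α)
    (X : Ω → ℝ) (hint : Integrable X μ)
    (hbd : ∀ᵐ ω ∂μ, |X ω| ≤ 2 * ε)
    (hmean : ∫ ω, X ω ∂μ = 0)
    (habs : 6 * α * ε ≤ ∫ ω, |X ω| ∂μ) :
    ENNReal.ofReal α ≤ μ {ω | X ω < -(α * ε)} := by
  have hneg_mean : 3 * α * ε ≤ ∫ ω, (X ω)⁻ ∂μ := by
    rw [integral_abs_eq_two_mul_integral_negPart_add_integral hint, hmean] at habs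
    linarith
  have hneg_le : ∀ᵐ ω ∂μ, (X ω)⁻ ≤ 2 * ε := by
    filter_upwards [hbd] with ω hω
    rw [negPart_def]
    exact max_le ((neg_le_abs (X ω)).trans hω) (by positivity)
  have hsplit :=
    integral_le_mul_measureReal_add_mul (f := fun ω => (X ω)⁻) hint.neg_part hneg_le (α * ε)
  have hlevel : {ω | α * ε < (X ω)⁻} = {ω | X ω < -(α * ε)} := by
    ext ω
    exact lt_negPart_iff_lt_neg (mul_pos hα hε).le
  rw [hlevel] at hsplit
  have hle_one : μ.real {ω | (X ω)⁻ ≤ α * ε} ≤ 1 := measureReal_le_one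
  refine ENNReal.ofReal_le_of_le_toReal ?_
  change α ≤ μ.real {ω | X ω < -(α * ε)}
  nlinarith [mul_pos hα hε]

/-- **Quantitative lower bound on the negative part.** If `|X| ≤ 2ε` a.s., `E[X] = 0` and
`E[|X|] ≥ 6αε` for some `α ∈ (0,1)`, `ε > 0`, then `P[X < -αε] ≥ α`. -/
theorem neg_part_bound
    {m : MeasurableSpace Ω} (μ : Measure Ω) [IsProbabilityMeasure μ]
    (ε α : ℝ) (hε : 0 < ε) (hα : 0 < α) (hα1 : α < 1)
    (X : Ω → ℝ) (hint : Integrable X μ)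
    (hbd : ∀ᵐ ω ∂μ, |X ω| ≤ 2 * ε)
    (hmean : ∫ ω, X ω ∂μ = 0)
    (habs : 6 * α * ε ≤ ∫ ω, |X ω| ∂μ) :
    ENNReal.ofReal α ≤ μ {ω | X ω < -(α * ε)} :=
  neg_part_bound_general (m := m) μ ε α hε hα X hint hbd hmean habs
end
end

section
/- Let $(X^n)_{n\ge0}$ be a sequence of semimartingales satisfying the (P-UT) property. Then the sequence of random variables $(\sup_{t \le 1} |X^n_t|)_{n \ge 0}$ is bounded in $L^0$ (bounded in probability), and the sequence of quadratic variations $([X^n, X^n]_1)_{n \ge 0}$ is bounded in $L^0$. -/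
open MeasureTheory Filter Set
open scoped ENNReal Topology

noncomputable section
open Classical

variable {Ω : Type*}

/-! Let `S(a)` be the supremum over `n` and over simple strategies `|H| ≤ 1` of
`μ(|(H • Xⁿ)₁| ≥ a)`; (P-UT) says `S(a) → 0`. If `|Xⁿ|` reaches `a` at one of finitely many times,
the strategy `1_{(0,σ]}` that stops at the first such time `σ` has `|(H • Xⁿ)₁| ≥ a`. By
right-continuity `{sup_{t ≤ 1} |Xⁿ_t| > a}` is the increasing union of these events over the dyadic
grids, so its probability is at most `S(a)`.

For the quadratic variation, along a partition `∑ (ΔXⁿ)² = (Xⁿ₁)² - 2 ∑ Xⁿ_{tᵢ} ΔXⁿᵢ`, and where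
`|Xⁿ| ≤ c` on the grid the last sum is `c (H • Xⁿ)₁` for the strategy `H = Xⁿ/c` clipped to
`[-1, 1]`. Hence `μ(|∑ (ΔXⁿ)²| ≥ 3c²) ≤ 2 S(c)`, and this bound passes to `[Xⁿ, Xⁿ]₁` along
partitions with vanishing mesh. -/

namespace Partition01

lemma monotoneOn_t (P : Partition01) : MonotoneOn P.t (Iic P.r) :=
  monotoneOn_of_le_succ ordConnected_Iic fun j _ _ hj => by
    simpa using (P.mono j (Order.succ_le_iff.1 hj)).le

lemma t_mem (P : Partition01) {i : ℕ} (hi : i ≤ P.r) : P.t i ∈ Icc (0 : ℝ) 1 := by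
  rw [← P.zero, ← P.last]
  exact ⟨P.monotoneOn_t (Nat.zero_le P.r) hi (Nat.zero_le i), P.monotoneOn_t hi (le_refl P.r) hi⟩

def times (P : Partition01) : Finset ℝ := (Finset.range (P.r + 1)).image P.t

lemma times_subset_Icc (P : Partition01) : ∀ q ∈ P.times, q ∈ Icc (0 : ℝ) 1 := by
  simp only [times, Finset.mem_image, Finset.mem_range]
  rintro _ ⟨i, hi, rfl⟩
  exact P.t_mem (Nat.lt_succ_iff.1 hi)

def dyadic (j : ℕ) : Partition01 where
  r := 2 ^ j
  t i := i / 2 ^ j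
  pos := by positivity
  zero := by simp
  last := by simp
  mono i _ := by gcongr; simp

lemma dyadic_mesh (j : ℕ) : (dyadic j).mesh = 1 / 2 ^ j := by
  have : Nonempty (Fin (dyadic j).r) := ⟨⟨0, (dyadic j).pos⟩⟩
  simp only [mesh, dyadic, Nat.cast_add, Nat.cast_one, add_div, add_sub_cancel_left, ciSup_const]

lemma tendsto_dyadic_mesh : Tendsto (fun j => (dyadic j).mesh) atTop (𝓝 0) := by
  simp only [dyadic_mesh, one_div, ← inv_pow]
  exact tendsto_pow_atTop_nhds_zero_of_lt_one (by norm_num) (by norm_num)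

lemma dyadic_times_mono : Monotone fun j => (dyadic j).times := by
  refine monotone_nat_of_le_succ fun j q hq => ?_
  simp only [times, dyadic, Finset.mem_image, Finset.mem_range] at hq ⊢
  obtain ⟨i, hi, rfl⟩ := hq
  refine ⟨2 * i, by rw [pow_succ]; omega, ?_⟩
  rw [pow_succ]; push_cast; field_simp

lemma exists_mem_dyadic_times_Ico {t u : ℝ} (ht : t ∈ Icc (0 : ℝ) 1) (htu : t < u) :
    ∃ j, ∃ q ∈ (dyadic j).times, q ∈ Ico t u := by
  obtain ⟨j, hj⟩ := exists_pow_lt_of_lt_one (sub_pos.2 htu) (by norm_num : (1 / 2 : ℝ) < 1)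
  have h2j : (0 : ℝ) < 2 ^ j := by positivity
  refine ⟨j, ⌈t * 2 ^ j⌉₊ / 2 ^ j, ?_, ?_, ?_⟩
  · simp only [times, dyadic, Finset.mem_image, Finset.mem_range]
    refine ⟨⌈t * 2 ^ j⌉₊, Nat.lt_succ_iff.2 (Nat.ceil_le.2 ?_), rfl⟩
    push_cast; nlinarith [ht.2]
  · rw [le_div_iff₀ h2j]; exact Nat.le_ceil _
  · rw [div_lt_iff₀ h2j]
    have := Nat.ceil_lt_add_one (by nlinarith [ht.1] : 0 ≤ t * 2 ^ j)
    rw [div_pow, one_pow, div_lt_iff₀ h2j] at hj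
    nlinarith

end Partition01

namespace SimpleStrategy

variable {m : MeasurableSpace Ω} {𝓕 : Filtration ℝ m}

/-- The strategy `1_{(0, σ]}`. -/
def upTo (σ : Ω → ℝ) (hσ : IsStoppingTime 𝓕 fun ω => ((σ ω : ℝ) : WithTop ℝ))
    (hσ_mem : ∀ ω, σ ω ∈ Icc (0 : ℝ) 1) : SimpleStrategy 𝓕 where
  n := 1
  τ i ω := if i = 0 then 0 else if i = 1 then σ ω else 1
  K i _ := if i = 0 then 1 else 0
  isStopping i := by
    rcases Nat.lt_trichotomy i 1 with hi | rfl | hi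
    · simpa [Nat.lt_one_iff.1 hi] using isStoppingTime_const 𝓕 (0 : ℝ)
    · simpa using hσ
    · obtain ⟨k, rfl⟩ : ∃ k, i = k + 2 := ⟨i - 2, by omega⟩
      simpa using isStoppingTime_const 𝓕 (1 : ℝ)
  mono ω := by
    refine monotone_nat_of_le_succ fun i => ?_
    rcases Nat.lt_trichotomy i 1 with hi | rfl | hi
    · simpa [Nat.lt_one_iff.1 hi] using (hσ_mem ω).1
    · simpa using (hσ_mem ω).2
    · obtain ⟨k, rfl⟩ : ∃ k, i = k + 2 := ⟨i - 2, by omega⟩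
      simp
  zero _ := rfl
  last _ := rfl
  meas _ := measurable_const

lemma bounded1_upTo (σ : Ω → ℝ) (hσ : IsStoppingTime 𝓕 fun ω => ((σ ω : ℝ) : WithTop ℝ))
    (hσ_mem : ∀ ω, σ ω ∈ Icc (0 : ℝ) 1) : (upTo σ hσ hσ_mem).Bounded1 := by
  intro i ω
  simp only [upTo]
  split_ifs <;> norm_num

lemma integral_upTo_one (σ : Ω → ℝ) (hσ : IsStoppingTime 𝓕 fun ω => ((σ ω : ℝ) : WithTop ℝ))
    (hσ_mem : ∀ ω, σ ω ∈ Icc (0 : ℝ) 1) (Y : ℝ → Ω → ℝ) (ω : Ω) :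
    (upTo σ hσ hσ_mem).integral Y 1 ω = Y (σ ω) ω - Y 0 ω := by
  simp [integral, upTo, (hσ_mem ω).2]

def ofPartition (P : Partition01) (H : ℝ → Ω → ℝ) (hH : Adapted 𝓕 H) : SimpleStrategy 𝓕 where
  n := P.r - 1
  τ i _ := P.t (min i P.r)
  K i := H (P.t (min i P.r))
  isStopping _ := isStoppingTime_const 𝓕 _
  mono _ i j hij :=
    P.monotoneOn_t (min_le_right i P.r) (min_le_right j P.r) (min_le_min_right _ hij)
  zero _ := by simp [P.zero]
  last _ := by simp [Nat.sub_add_cancel P.pos, P.last]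
  meas i := by
    rw [IsStoppingTime.measurableSpace_const]
    exact hH _

lemma bounded1_ofPartition (P : Partition01) {H : ℝ → Ω → ℝ} (hH : Adapted 𝓕 H)
    (hH1 : ∀ s ω, |H s ω| ≤ 1) : (ofPartition P H hH).Bounded1 :=
  fun i ω => hH1 (P.t (min i P.r)) ω

lemma integral_ofPartition (P : Partition01) {H : ℝ → Ω → ℝ} (hH : Adapted 𝓕 H)
    (Y : ℝ → Ω → ℝ) : (ofPartition P H hH).integral Y = leftRiemannSum P H Y := by
  ext t ω
  simp only [integral, ofPartition, leftRiemannSum, Nat.sub_add_cancel P.pos]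
  refine Finset.sum_congr rfl fun i hi => ?_
  have hi := Finset.mem_range.1 hi
  rw [show min i P.r = i from min_eq_left hi.le, show min (i + 1) P.r = i + 1 from min_eq_left hi]

end SimpleStrategy

section HittingTime

def finsetHitTime (Y : ℝ → Ω → ℝ) (a : ℝ) (s : Finset ℝ) (ω : Ω) : ℝ :=
  if h : (s.filter fun q => a ≤ |Y q ω|).Nonempty then (s.filter fun q => a ≤ |Y q ω|).min' h
  else 1

variable {Y : ℝ → Ω → ℝ} {a : ℝ} {s : Finset ℝ}

lemma finsetHitTime_mem_Icc (hs : ∀ q ∈ s, q ∈ Icc (0 : ℝ) 1) (ω : Ω) :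
    finsetHitTime Y a s ω ∈ Icc (0 : ℝ) 1 := by
  unfold finsetHitTime
  split_ifs with h
  · exact hs _ (Finset.mem_filter.1 (Finset.min'_mem _ h)).1
  · exact ⟨zero_le_one, le_rfl⟩

lemma le_abs_finsetHitTime {ω : Ω} (h : ∃ q ∈ s, a ≤ |Y q ω|) :
    a ≤ |Y (finsetHitTime Y a s ω) ω| := by
  have hne : (s.filter fun q => a ≤ |Y q ω|).Nonempty := by simpa [Finset.filter_nonempty_iff]
  rw [finsetHitTime, dif_pos hne]
  exact (Finset.mem_filter.1 (Finset.min'_mem _ hne)).2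

lemma finsetHitTime_le_iff {t : ℝ} (ht : t < 1) (ω : Ω) :
    finsetHitTime Y a s ω ≤ t ↔ ∃ q ∈ s, q ≤ t ∧ a ≤ |Y q ω| := by
  unfold finsetHitTime
  split_ifs with h
  · constructor
    · intro hle
      obtain ⟨hmem, hYa⟩ := Finset.mem_filter.1 (Finset.min'_mem _ h)
      exact ⟨_, hmem, hle, hYa⟩
    · rintro ⟨q, hq, hqt, hYq⟩
      exact (Finset.min'_le _ q (Finset.mem_filter.2 ⟨hq, hYq⟩)).trans hqt
  · simp only [Finset.filter_nonempty_iff, not_exists, not_and] at h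
    exact ⟨fun h1 => absurd h1 (not_le.2 ht), fun ⟨q, hq, _, hYq⟩ => absurd hYq (h q hq)⟩

variable {m : MeasurableSpace Ω} {𝓕 : Filtration ℝ m}

lemma isStoppingTime_finsetHitTime (hY : Adapted 𝓕 Y) (hs : ∀ q ∈ s, q ∈ Icc (0 : ℝ) 1) :
    IsStoppingTime 𝓕 fun ω => ((finsetHitTime Y a s ω : ℝ) : WithTop ℝ) := by
  intro t
  simp only [WithTop.coe_le_coe]
  rcases lt_or_ge t 1 with ht | ht
  · have hset : {ω | finsetHitTime Y a s ω ≤ t}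
        = ⋃ q ∈ s.filter (· ≤ t), {ω | a ≤ |Y q ω|} := by
      ext ω
      simp [finsetHitTime_le_iff ht, and_assoc]
    rw [hset]
    refine Finset.measurableSet_biUnion _ fun q hq => ?_
    exact 𝓕.mono (Finset.mem_filter.1 hq).2 _ ((measurable_abs.comp (hY q)) measurableSet_Ici)
  · simp [fun ω => (finsetHitTime_mem_Icc (Y := Y) (a := a) hs ω).2.trans ht]

end HittingTime

lemma qcovSum_self_one (P : Partition01) (Y : ℝ → Ω → ℝ) (ω : Ω) :
    qcovSum P Y Y 1 ω = Y 1 ω ^ 2 - Y 0 ω ^ 2 - 2 * leftRiemannSum P Y Y 1 ω := by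
  have hmin : ∀ i ≤ P.r, min (P.t i) 1 = P.t i := fun i hi => min_eq_left (P.t_mem hi).2
  have hterm : ∀ i ∈ Finset.range P.r,
      (Y (min (P.t (i + 1)) 1) ω - Y (min (P.t i) 1) ω) *
          (Y (min (P.t (i + 1)) 1) ω - Y (min (P.t i) 1) ω)
        = (Y (P.t (i + 1)) ω ^ 2 - Y (P.t i) ω ^ 2)
          - 2 * (Y (P.t i) ω * (Y (min (P.t (i + 1)) 1) ω - Y (min (P.t i) 1) ω)) := by
    intro i hi
    have hi := Finset.mem_range.1 hi
    rw [hmin i hi.le, hmin (i + 1) hi]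
    ring
  rw [qcovSum, leftRiemannSum, Finset.sum_congr rfl hterm, Finset.sum_sub_distrib,
    Finset.sum_range_sub (fun i => Y (P.t i) ω ^ 2), ← Finset.mul_sum, P.zero, P.last]

def clipDiv (Y : ℝ → Ω → ℝ) (c : ℝ) (s : ℝ) (ω : Ω) : ℝ := max (-1) (min 1 (Y s ω / c))

lemma abs_clipDiv_le_one (Y : ℝ → Ω → ℝ) (c s : ℝ) (ω : Ω) : |clipDiv Y c s ω| ≤ 1 :=
  abs_le.2 ⟨le_max_left _ _, max_le (by norm_num) (min_le_left _ _)⟩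

lemma adapted_clipDiv {m : MeasurableSpace Ω} {𝓕 : Filtration ℝ m} {Y : ℝ → Ω → ℝ}
    (hY : Adapted 𝓕 Y) (c : ℝ) : Adapted 𝓕 (clipDiv Y c) :=
  fun s => measurable_const.max (measurable_const.min ((hY s).div_const c))

lemma leftRiemannSum_self_eq_mul_clipDiv (P : Partition01) (Y : ℝ → Ω → ℝ) {c : ℝ} (hc : 0 < c)
    {ω : Ω} (hYc : ∀ q ∈ P.times, |Y q ω| ≤ c) :
    leftRiemannSum P Y Y 1 ω = c * leftRiemannSum P (clipDiv Y c) Y 1 ω := by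
  rw [leftRiemannSum, leftRiemannSum, Finset.mul_sum]
  refine Finset.sum_congr rfl fun i hi => ?_
  have hYi : |Y (P.t i) ω / c| ≤ 1 := by
    rw [abs_div, abs_of_pos hc, div_le_one hc]
    exact hYc _ (Finset.mem_image_of_mem _
      (Finset.mem_range.2 (Nat.lt_succ_of_lt (Finset.mem_range.1 hi))))
  rw [clipDiv, min_eq_right (abs_le.1 hYi).2, max_eq_right (abs_le.1 hYi).1]
  field_simp

lemma abs_qcovSum_self_le (P : Partition01) {Y : ℝ → Ω → ℝ} {c : ℝ} (hc : 0 < c) {ω : Ω}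
    (hY0 : Y 0 ω = 0) (hYc : ∀ q ∈ P.times, |Y q ω| ≤ c) :
    |qcovSum P Y Y 1 ω| ≤ c ^ 2 + 2 * c * |leftRiemannSum P (clipDiv Y c) Y 1 ω| := by
  have hY1 : |Y 1 ω| ≤ c := hYc 1 (Finset.mem_image.2 ⟨P.r, Finset.self_mem_range_succ _, P.last⟩)
  rw [qcovSum_self_one, leftRiemannSum_self_eq_mul_clipDiv P Y hc hYc, hY0]
  calc |Y 1 ω ^ 2 - 0 ^ 2 - 2 * (c * leftRiemannSum P (clipDiv Y c) Y 1 ω)|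
      ≤ |Y 1 ω| ^ 2 + 2 * c * |leftRiemannSum P (clipDiv Y c) Y 1 ω| := by
        refine (abs_sub _ _).trans ?_
        simp [abs_mul, abs_of_pos hc, mul_assoc]
    _ ≤ c ^ 2 + 2 * c * |leftRiemannSum P (clipDiv Y c) Y 1 ω| := by
        gcongr

lemma runSup_nonneg (Y : ℝ → Ω → ℝ) (ω : Ω) : 0 ≤ runSup Y ω :=
  Real.sSup_nonneg (by rintro _ ⟨t, -, rfl⟩; exact abs_nonneg _)

section Tail

variable {m : MeasurableSpace Ω} {𝓕 : Filtration ℝ m} {μ : Measure Ω} {Y : ℝ → Ω → ℝ} {a c : ℝ}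

/-- (P-UT) at time `1` says that `⨆ n, integralTail 𝓕 μ (X n)` tends to `0`. -/
def integralTail (𝓕 : Filtration ℝ m) (μ : Measure Ω) (Y : ℝ → Ω → ℝ) (a : ℝ) : ℝ≥0∞ :=
  ⨆ (H : SimpleStrategy 𝓕) (_ : H.Bounded1), μ {ω | a ≤ |H.integral Y 1 ω|}

lemma measure_le_integralTail {H : SimpleStrategy 𝓕} (hH : H.Bounded1) :
    μ {ω | a ≤ |H.integral Y 1 ω|} ≤ integralTail 𝓕 μ Y a :=
  le_iSup₂ (f := fun (H : SimpleStrategy 𝓕) (_ : H.Bounded1) => μ {ω | a ≤ |H.integral Y 1 ω|})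
    H hH

lemma measure_exists_le_abs_le_integralTail (hY : Adapted 𝓕 Y) (hY0 : ∀ ω, Y 0 ω = 0)
    {s : Finset ℝ} (hs : ∀ q ∈ s, q ∈ Icc (0 : ℝ) 1) :
    μ {ω | ∃ q ∈ s, a ≤ |Y q ω|} ≤ integralTail 𝓕 μ Y a := by
  have hσ := isStoppingTime_finsetHitTime (a := a) hY hs
  have hσ_mem := finsetHitTime_mem_Icc (Y := Y) (a := a) hs
  refine le_trans (measure_mono fun ω hω => ?_)
    (measure_le_integralTail (SimpleStrategy.bounded1_upTo _ hσ hσ_mem))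
  rw [mem_ofPred_eq, SimpleStrategy.integral_upTo_one, hY0, sub_zero]
  exact le_abs_finsetHitTime hω

lemma measure_lt_runSup_le_integralTail
    (hY_rc : ∀ ω t, ContinuousWithinAt (fun s => Y s ω) (Ici t) t) (hY : Adapted 𝓕 Y)
    (hY0 : ∀ ω, Y 0 ω = 0) : μ {ω | a < runSup Y ω} ≤ integralTail 𝓕 μ Y a := by
  have hsub : {ω | a < runSup Y ω} ⊆
      ⋃ j, {ω | ∃ q ∈ (Partition01.dyadic j).times, a ≤ |Y q ω|} := by
    intro ω hω
    obtain ⟨_, ⟨t, ht, rfl⟩, hat⟩ := exists_lt_of_lt_csSup (⟨_, mem_image_of_mem _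
      (left_mem_Icc.2 zero_le_one)⟩ : ((fun t => |Y t ω|) '' Icc (0 : ℝ) 1).Nonempty) hω
    have hnhds : {s | a < |Y s ω|} ∈ 𝓝[≥] t :=
      (hY_rc ω t).abs (isOpen_Ioi.mem_nhds hat)
    obtain ⟨u, htu, hu⟩ := mem_nhdsGE_iff_exists_Ico_subset.1 hnhds
    obtain ⟨j, q, hq, hqtu⟩ := Partition01.exists_mem_dyadic_times_Ico ht htu
    exact mem_iUnion.2 ⟨j, q, hq, (hu hqtu).le⟩
  have hmono : Monotone fun j => {ω | ∃ q ∈ (Partition01.dyadic j).times, a ≤ |Y q ω|} :=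
    fun i j hij ω ⟨q, hq, hYq⟩ => ⟨q, Partition01.dyadic_times_mono hij hq, hYq⟩
  calc μ {ω | a < runSup Y ω}
      ≤ μ (⋃ j, {ω | ∃ q ∈ (Partition01.dyadic j).times, a ≤ |Y q ω|}) := measure_mono hsub
    _ = ⨆ j, μ {ω | ∃ q ∈ (Partition01.dyadic j).times, a ≤ |Y q ω|} := hmono.measure_iUnion
    _ ≤ integralTail 𝓕 μ Y a := iSup_le fun j =>
      measure_exists_le_abs_le_integralTail hY hY0 (Partition01.dyadic j).times_subset_Icc

lemma measure_le_abs_qcovSum_le_integralTail (P : Partition01) (hY : Adapted 𝓕 Y)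
    (hY0 : ∀ ω, Y 0 ω = 0) (hc : 0 < c) :
    μ {ω | 3 * c ^ 2 ≤ |qcovSum P Y Y 1 ω|} ≤ 2 * integralTail 𝓕 μ Y c := by
  let H := SimpleStrategy.ofPartition P _ (adapted_clipDiv hY c)
  have hsub : {ω | 3 * c ^ 2 ≤ |qcovSum P Y Y 1 ω|}
      ⊆ {ω | ∃ q ∈ P.times, c ≤ |Y q ω|} ∪ {ω | c ≤ |H.integral Y 1 ω|} := by
    intro ω (hω : 3 * c ^ 2 ≤ _)
    by_contra hnot
    simp only [mem_union, mem_ofPred_eq, not_or, not_exists, not_and, not_le] at hnot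
    have hle := abs_qcovSum_self_le P hc (hY0 ω) fun q hq => (hnot.1 q hq).le
    rw [← SimpleStrategy.integral_ofPartition P (adapted_clipDiv hY c)] at hle
    nlinarith [hnot.2]
  calc μ {ω | 3 * c ^ 2 ≤ |qcovSum P Y Y 1 ω|}
      ≤ μ {ω | ∃ q ∈ P.times, c ≤ |Y q ω|} + μ {ω | c ≤ |H.integral Y 1 ω|} :=
        (measure_mono hsub).trans (measure_union_le _ _)
    _ ≤ integralTail 𝓕 μ Y c + integralTail 𝓕 μ Y c :=
        add_le_add (measure_exists_le_abs_le_integralTail hY hY0 P.times_subset_Icc)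
          (measure_le_integralTail
            (SimpleStrategy.bounded1_ofPartition P _ (abs_clipDiv_le_one Y c)))
    _ = 2 * integralTail 𝓕 μ Y c := (two_mul _).symm

lemma measure_le_abs_qcov_le_integralTail {Q : ℝ → Ω → ℝ} (hQ : IsQCovProcess μ Y Y Q)
    (hY : Adapted 𝓕 Y) (hY0 : ∀ ω, Y 0 ω = 0) (hc : 0 < c) (ha : 3 * c ^ 2 + 1 ≤ a) :
    μ {ω | a ≤ |Q 1 ω|} ≤ 2 * integralTail 𝓕 μ Y c := by
  let P := Partition01.dyadic
  have hconv : Tendsto (fun k => μ {ω | 1 ≤ edist (qcovSum (P k) Y Y 1 ω) (Q 1 ω)}) atTop (𝓝 0) :=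
    hQ P Partition01.tendsto_dyadic_mesh 1 (right_mem_Icc.2 zero_le_one) 1 one_pos
  have hbound : ∀ k, μ {ω | a ≤ |Q 1 ω|}
      ≤ μ {ω | 1 ≤ edist (qcovSum (P k) Y Y 1 ω) (Q 1 ω)} + 2 * integralTail 𝓕 μ Y c := by
    intro k
    refine le_trans (measure_mono fun ω (hω : a ≤ _) => ?_) ((measure_union_le _ _).trans
      (add_le_add le_rfl (measure_le_abs_qcovSum_le_integralTail (P k) hY hY0 hc)))
    by_contra hnot
    simp only [mem_union, mem_ofPred_eq, not_or, not_le, edist_dist, ENNReal.ofReal_lt_one,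
      Real.dist_eq] at hnot
    have := abs_sub_abs_le_abs_sub (Q 1 ω) (qcovSum (P k) Y Y 1 ω)
    rw [abs_sub_comm] at this
    linarith
  simpa using ge_of_tendsto (hconv.add_const (2 * integralTail 𝓕 μ Y c)) (.of_forall hbound)

end Tail

lemma L0BoundedSeq.of_measure_le {m : MeasurableSpace Ω} {μ : Measure Ω} {ξ : ℕ → Ω → ℝ}
    {T : ℝ → ℝ≥0∞} (hT : Tendsto T atTop (𝓝 0)) {g : ℝ → ℝ} (hg : Tendsto g atTop atTop)
    (hξ : ∀ᶠ a in atTop, ∀ n, μ {ω | a ≤ |ξ n ω|} ≤ T (g a)) : L0BoundedSeq μ ξ :=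
  tendsto_of_tendsto_of_tendsto_of_le_of_le' tendsto_const_nhds (hT.comp hg)
    (.of_forall fun _ => bot_le) (hξ.mono fun _ h => iSup_le h)

theorem PUT_L0_bounds_general
    {m : MeasurableSpace Ω} {𝓕 : Filtration ℝ m} {μ : Measure Ω}
    (X : ℕ → ℝ → Ω → ℝ)
    (hcad : ∀ n, IsCadlag (X n)) (hadap : ∀ n, Adapted 𝓕 (X n))
    (h0 : ∀ n ω, X n 0 ω = 0) (hPUT : PUT 𝓕 μ X)
    (Q : ℕ → ℝ → Ω → ℝ) (hQ : ∀ n, IsQCovProcess μ (X n) (X n) (Q n)) :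
    L0BoundedSeq μ (fun n ω => runSup (X n) ω) ∧ L0BoundedSeq μ (fun n ω => Q n 1 ω) := by
  let S : ℝ → ℝ≥0∞ := fun a => ⨆ n, integralTail 𝓕 μ (X n) a
  have hS : Tendsto S atTop (𝓝 0) := hPUT 1 (right_mem_Icc.2 zero_le_one)
  have hXS : ∀ n a, integralTail 𝓕 μ (X n) a ≤ S a :=
    fun n a => le_iSup (fun n => integralTail 𝓕 μ (X n) a) n
  constructor
  · refine .of_measure_le hS (tendsto_atTop_add_const_right _ (-1) tendsto_id)
      (.of_forall fun a n => le_trans (measure_mono fun ω (hω : a ≤ _) => ?_)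
        ((measure_lt_runSup_le_integralTail (fun ω => (hcad n ω).1) (hadap n) (h0 n)).trans
          (hXS n _)))
    show a + -1 < runSup (X n) ω
    rw [abs_of_nonneg (runSup_nonneg _ _)] at hω
    linarith
  · have h2S : Tendsto (fun b => 2 * S b) atTop (𝓝 0) := by
      simpa using ENNReal.Tendsto.const_mul (a := 2) hS (.inr ENNReal.ofNat_ne_top)
    have hg : Tendsto (fun a : ℝ => √((a - 1) / 3)) atTop atTop :=
      Real.tendsto_sqrt_atTop.comp
        ((tendsto_atTop_add_const_right _ (-1) tendsto_id).atTop_div_const (by norm_num))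
    refine .of_measure_le h2S hg ?_
    filter_upwards [eventually_gt_atTop 1] with a ha n
    have hc : 0 < √((a - 1) / 3) := Real.sqrt_pos.2 (by linarith)
    refine (measure_le_abs_qcov_le_integralTail (hQ n) (hadap n) (h0 n) hc ?_).trans
      (by gcongr; exact hXS n _)
    rw [Real.sq_sqrt (by linarith)]
    linarith

/-- **(P-UT) yields `L⁰`-bounds.** If a sequence of semimartingales `(Xⁿ)` satisfies (P-UT),
then `(sup_{t ≤ 1}|Xⁿ_t|)ₙ` and `([Xⁿ,Xⁿ]_1)ₙ` are bounded in `L⁰`. -/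
theorem PUT_L0_bounds
    {m : MeasurableSpace Ω} {𝓕 : Filtration ℝ m} {μ : Measure Ω} [IsProbabilityMeasure μ]
    (X : ℕ → ℝ → Ω → ℝ)
    (hcad : ∀ n, IsCadlag (X n)) (hadap : ∀ n, Adapted 𝓕 (X n))
    (h0 : ∀ n ω, X n 0 ω = 0) (hPUT : PUT 𝓕 μ X)
    (Q : ℕ → ℝ → Ω → ℝ) (hQ : ∀ n, IsQCovProcess μ (X n) (X n) (Q n)) :
    L0BoundedSeq μ (fun n ω => runSup (X n) ω) ∧ L0BoundedSeq μ (fun n ω => Q n 1 ω) :=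
  PUT_L0_bounds_general X hcad hadap h0 hPUT Q hQ
end
end
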